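/- arXiv:2007.11929 — 7 statements merged into one kernel-verified Lean document; each statement's English description precedes it below -/
import Mathlib

section
/- Let n ≥ 1 and let m pairs (i_1,j_1),…,(i_m,j_m) of indices in Fin n with i_k ≠ j_k be given. Then the Lie subalgebra of Matrix (Fin n) (Fin n) ℝ generated by {B i_1 j_1, …, B i_m j_m} equals so(n) if and only if the simple graph G_contr on Fin n whose edge set is exactly {{i_1,j_1},…,{i_m,j_m}} is connected. (This is the Lie algebra rank condition characterizing controllability of the driftless bilinear system dX/dt = (∑_k u_k(t) B i_k j_k) X on SO(n).) -/
open Matrix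

attribute [local instance 100] LieRing.ofAssociativeRing

/-- The standard basis matrix `E i j`. -/
noncomputable def E {n : ℕ} (i j : Fin n) : Matrix (Fin n) (Fin n) ℝ :=
  Matrix.single i j 1

/-- `B i j = E i j - E j i`, a basis element of `so(n)`. -/
noncomputable def B {n : ℕ} (i j : Fin n) : Matrix (Fin n) (Fin n) ℝ :=
  E i j - E j i

/-- The special orthogonal Lie algebra `so(n)` of skew-symmetric matrices. -/
def so (n : ℕ) : LieSubalgebra ℝ (Matrix (Fin n) (Fin n) ℝ) where
  carrier := {X | Xᵀ = -X}
  add_mem' := by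
    intro X Y hX hY
    simp only [Set.mem_setOf_eq] at *
    rw [Matrix.transpose_add, hX, hY, neg_add]
  zero_mem' := by simp
  smul_mem' := by
    intro c X hX
    simp only [Set.mem_setOf_eq] at *
    rw [Matrix.transpose_smul, hX, smul_neg]
  lie_mem' := by
    intro X Y hX hY
    simp only [Set.mem_setOf_eq] at *
    rw [Ring.lie_def, Matrix.transpose_sub, Matrix.transpose_mul, Matrix.transpose_mul, hX, hY]
    simp [neg_mul_neg, neg_sub]

/-!
Brackets of the generators follow paths in the graph, `⁅B i j, B j k⁆ = B i k`, so for a connected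
graph every `B a b` is generated, and these span `so(n)`. Conversely, the matrices supported on the
blocks `C × C` of the connected components `C` form a Lie subalgebra containing every generator, and
it contains `B a b` only when `a` and `b` lie in the same component.
-/

namespace Matrix

variable {ι R : Type*} [Fintype ι] [CommRing R]

theorem mul_apply_eq_zero_of_not_rel {s : Setoid ι} {X Y : Matrix ι ι R}
    (hX : ∀ p q, ¬ s p q → X p q = 0) (hY : ∀ p q, ¬ s p q → Y p q = 0) {p q : ι}
    (hpq : ¬ s p q) : (X * Y) p q = 0 := by
  rw [mul_apply]
  refine Finset.sum_eq_zero fun r _ => ?_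
  by_cases hpr : s p r
  · rw [hY r q fun hrq => hpq (s.trans hpr hrq), mul_zero]
  · rw [hX p r hpr, zero_mul]

def blockLieSubalgebra [DecidableEq ι] (s : Setoid ι) : LieSubalgebra R (Matrix ι ι R) where
  carrier := {X | ∀ p q, ¬ s p q → X p q = 0}
  add_mem' hX hY p q h := by simp [hX p q h, hY p q h]
  zero_mem' _ _ _ := rfl
  smul_mem' c X hX p q h := by simp [hX p q h]
  lie_mem' hX hY p q h := by
    rw [Ring.lie_def, sub_apply, mul_apply_eq_zero_of_not_rel hX hY h,
      mul_apply_eq_zero_of_not_rel hY hX h, sub_zero]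

end Matrix

section B

variable {n : ℕ}

theorem B_apply (i j a b : Fin n) :
    B i j a b = (if i = a ∧ j = b then 1 else 0) - (if j = a ∧ i = b then 1 else 0) := by
  simp [B, E, single]

theorem B_self (i : Fin n) : B i i = 0 := sub_self _

theorem B_swap (i j : Fin n) : B j i = -B i j := (neg_sub _ _).symm

theorem B_mem_so (i j : Fin n) : B i j ∈ so n := by
  show (B i j)ᵀ = -B i j
  simp [B, E, transpose_single]

theorem lie_B_B {i j k : Fin n} (hij : i ≠ j) (hjk : j ≠ k) (hik : i ≠ k) :
    ⁅B i j, B j k⁆ = B i k := by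
  simp only [B, E, Ring.lie_def, sub_mul, mul_sub]
  rw [single_mul_single_same, single_mul_single_of_ne (h := hij),
    single_mul_single_of_ne (h := hjk), single_mul_single_of_ne (h := hik),
    single_mul_single_of_ne (h := hik.symm), single_mul_single_of_ne (h := hij.symm),
    single_mul_single_of_ne (h := hjk.symm), single_mul_single_same]
  simp

theorem sub_transpose_eq_sum_smul_B (X : Matrix (Fin n) (Fin n) ℝ) :
    X - Xᵀ = ∑ a, ∑ b, X a b • B a b := by
  conv_lhs => rw [matrix_eq_sum_single X]
  simp [B, E, smul_sub, transpose_sum, transpose_single]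

theorem so_le_of_forall_B_mem {L : LieSubalgebra ℝ (Matrix (Fin n) (Fin n) ℝ)}
    (hL : ∀ a b, B a b ∈ L) : so n ≤ L := by
  intro X (hX : Xᵀ = -X)
  have hhalf : X = (1 / 2 : ℝ) • (X - Xᵀ) := by
    rw [hX, sub_neg_eq_add, ← two_smul ℝ X, smul_smul]; norm_num
  rw [hhalf, sub_transpose_eq_sum_smul_B]
  exact L.smul_mem _ (sum_mem fun a _ => sum_mem fun b _ => L.smul_mem _ (hL a b))

theorem B_mem_blockLieSubalgebra_iff {s : Setoid (Fin n)} {i j : Fin n} :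
    B i j ∈ blockLieSubalgebra (R := ℝ) s ↔ s i j := by
  refine ⟨fun h => ?_, fun h p q hpq => ?_⟩
  · by_contra hij
    have hne : i ≠ j := fun e => hij (e ▸ s.refl i)
    simpa [B_apply, hne] using h i j hij
  · rw [B_apply, if_neg, if_neg, sub_zero]
    · rintro ⟨rfl, rfl⟩; exact hpq (s.symm h)
    · rintro ⟨rfl, rfl⟩; exact hpq h

theorem B_mem_of_reachable {G : SimpleGraph (Fin n)}
    {L : LieSubalgebra ℝ (Matrix (Fin n) (Fin n) ℝ)} (hL : ∀ a b, G.Adj a b → B a b ∈ L)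
    {a b : Fin n} (h : G.Reachable a b) : B a b ∈ L := by
  obtain ⟨w⟩ := h
  induction w with
  | nil => rw [B_self]; exact zero_mem L
  | @cons u v x huv _ ih =>
    by_cases hux : u = x
    · subst hux; rw [B_self]; exact zero_mem L
    by_cases hvx : v = x
    · subst hvx; exact hL u v huv
    rw [← lie_B_B huv.ne hvx hux]
    exact L.lie_mem (hL u v huv) ih

theorem B_mem_lieSpan_of_fromRel_adj {m : ℕ} {ij : Fin m → Fin n × Fin n} {a b : Fin n}
    (h : (SimpleGraph.fromRel fun a b => ∃ k, ij k = (a, b)).Adj a b) :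
    B a b ∈ LieSubalgebra.lieSpan ℝ _ (Set.range fun k => B (ij k).1 (ij k).2) := by
  obtain ⟨-, ⟨k, hk⟩ | ⟨k, hk⟩⟩ := (SimpleGraph.fromRel_adj _ _ _).1 h
  · exact LieSubalgebra.subset_lieSpan ⟨k, by simp [hk]⟩
  · rw [B_swap]
    exact neg_mem (LieSubalgebra.subset_lieSpan ⟨k, by simp [hk]⟩)

end B

theorem SimpleGraph.reachable_fromRel_of_rel {V : Type*} {r : V → V → Prop} {a b : V}
    (h : r a b) : (fromRel r).Reachable a b := by
  by_cases hab : a = b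
  · exact hab ▸ Reachable.refl a
  · exact ((fromRel_adj _ _ _).2 ⟨hab, Or.inl h⟩).reachable

theorem driftless_SOn_controllability_iff_connected_general
    (n m : ℕ) (hn : 1 ≤ n) (ij : Fin m → Fin n × Fin n) :
    LieSubalgebra.lieSpan ℝ (Matrix (Fin n) (Fin n) ℝ)
        (Set.range fun k => B (ij k).1 (ij k).2) = so n ↔
      (SimpleGraph.fromRel fun a b => ∃ k, ij k = (a, b)).Connected := by
  set G := SimpleGraph.fromRel fun a b => ∃ k, ij k = (a, b)
  constructor
  · intro hspan
    have hblock : LieSubalgebra.lieSpan ℝ _ (Set.range fun k => B (ij k).1 (ij k).2) ≤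
        blockLieSubalgebra G.reachableSetoid := by
      refine LieSubalgebra.lieSpan_le.2 ?_
      rintro _ ⟨k, rfl⟩
      exact B_mem_blockLieSubalgebra_iff.2 (SimpleGraph.reachable_fromRel_of_rel ⟨k, rfl⟩)
    have : Nonempty (Fin n) := ⟨⟨0, hn⟩⟩
    exact ⟨fun a b => B_mem_blockLieSubalgebra_iff.1 (hblock (hspan ▸ B_mem_so a b))⟩
  · intro hconn
    refine le_antisymm (LieSubalgebra.lieSpan_le.2 ?_) (so_le_of_forall_B_mem fun a b => ?_)
    · rintro _ ⟨k, rfl⟩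
      exact B_mem_so _ _
    · exact B_mem_of_reachable (fun _ _ => B_mem_lieSpan_of_fromRel_adj) (hconn.preconnected a b)

/-- Lie algebra rank condition for the driftless bilinear system on `SO(n)`:
the Lie algebra generated by the controlled terms equals `so(n)` iff the controlled
interaction graph is connected. -/
theorem driftless_SOn_controllability_iff_connected
    (n m : ℕ) (hn : 1 ≤ n) (ij : Fin m → Fin n × Fin n)
    (hij : ∀ k, (ij k).1 ≠ (ij k).2) :
    LieSubalgebra.lieSpan ℝ (Matrix (Fin n) (Fin n) ℝ)
        (Set.range fun k => B (ij k).1 (ij k).2) = so n ↔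
      (SimpleGraph.fromRel fun a b => ∃ k, ij k = (a, b)).Connected :=
  driftless_SOn_controllability_iff_connected_general n m hn ij
end

section
/- Let n ≥ 1, let (i_1,j_1),…,(i_{m_1},j_{m_1}) be pairs in Fin n with i_k ≠ j_k, and let (i_{m_1+1},j_{m_1+1}),…,(i_{m_2},j_{m_2}) be further pairs in Fin n with i_k ≠ j_k. Then the Lie subalgebra of Matrix (Fin n) (Fin n) ℝ generated by {E i_1 j_1, …, E i_{m_1} j_{m_1}} ∪ {C i_{m_1+1} j_{m_1+1}, …, C i_{m_2} j_{m_2}} equals sl(n,ℝ) if and only if the digraph on Fin n whose arcs are exactly (i_1,j_1),…,(i_{m_1},j_{m_1}) is strongly connected. (This is the Lie algebra rank condition characterizing controllability of the driftless bilinear system on SL(n).) -/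
open Matrix

attribute [local instance 100] LieRing.ofAssociativeRing

/-- `C i j = E i i - E j j`, a diagonal traceless matrix. -/
noncomputable def C {n : ℕ} (i j : Fin n) : Matrix (Fin n) (Fin n) ℝ :=
  E i i - E j j

/-- The special linear Lie algebra `sl(n, ℝ)` of traceless matrices. -/
noncomputable def sl (n : ℕ) : LieSubalgebra ℝ (Matrix (Fin n) (Fin n) ℝ) :=
  LieAlgebra.SpecialLinear.sl (Fin n) ℝ

/-- A digraph is strongly connected if every vertex is reachable from every vertex. -/
def StronglyConnected {V : Type*} (Adj : V → V → Prop) : Prop :=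
  ∀ u v : V, Relation.ReflTransGen Adj u v

/-! If the digraph is strongly connected, bracketing `E a c` with `E c b` along a path produces
every off-diagonal `E a b`, and `⁅E a z, E z a⁆ = E a a - E z z` then produces the traceless diagonal
matrices, hence all of `sl n`. If `v` is not reachable from `u`, every generator is block triangular
for the partition into vertices reachable from `u` and the rest; brackets preserve this, while
`E u v` violates it. -/

namespace Matrix

variable {ι R : Type*} [Fintype ι] [DecidableEq ι] [CommRing R]

theorem lie_single_single_of_ne {a c : ι} (b : ι) (hac : a ≠ c) (r s : R) :
    ⁅single a b r, single b c s⁆ = single a c (r * s) := by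
  rw [Ring.lie_def, single_mul_single_same, single_mul_single_of_ne (h := hac.symm), sub_zero]

theorem lie_single_single_swap (a b : ι) (r s : R) :
    ⁅single a b r, single b a s⁆ = single a a (r * s) - single b b (s * r) := by
  rw [Ring.lie_def, single_mul_single_same, single_mul_single_same]

theorem single_mem_of_reflTransGen {Adj : ι → ι → Prop} (L : LieSubalgebra R (Matrix ι ι R))
    (hAdj : ∀ a b, Adj a b → single a b (1 : R) ∈ L) {a b : ι}
    (hab : Relation.ReflTransGen Adj a b) (hne : a ≠ b) : single a b (1 : R) ∈ L := by
  induction hab using Relation.ReflTransGen.head_induction_on with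
  | refl => exact absurd rfl hne
  | @head a c hac _ ih =>
    by_cases hcb : c = b
    · exact hcb ▸ hAdj a c hac
    · simpa [lie_single_single_of_ne c hne] using L.lie_mem (hAdj a c hac) (ih hcb)

theorem eq_sum_single_sub_single_of_trace_eq_zero {X : Matrix ι ι R} (hX : X.trace = 0) (z : ι) :
    X = ∑ i, ∑ j,
      if i = j then X i i • (single i i (1 : R) - single z z 1) else X i j • single i j 1 := by
  have hsplit : ∀ i j, (if i = j then X i i • (single i i (1 : R) - single z z 1)
      else X i j • single i j 1) = single i j (X i j) - if i = j then single z z (X i i) else 0 := by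
    intro i j
    split_ifs with hij
    · subst hij; simp [smul_sub]
    · simp
  have hdiag : ∑ i, single z z (X i i) = 0 :=
    calc ∑ i, single z z (X i i) = single z z X.trace :=
          (map_sum (singleAddMonoidHom (α := R) z z) _ _).symm
      _ = 0 := by rw [hX, single_zero]
  simp only [hsplit, Finset.sum_sub_distrib, Finset.sum_ite_eq, Finset.mem_univ, if_true, hdiag,
    ← matrix_eq_sum_single, sub_zero]

theorem sl_le_of_single_mem (L : LieSubalgebra R (Matrix ι ι R))
    (h : ∀ a b, a ≠ b → single a b (1 : R) ∈ L) : LieAlgebra.SpecialLinear.sl ι R ≤ L := by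
  intro X hX
  rcases isEmpty_or_nonempty ι with hι | ⟨⟨z⟩⟩
  · exact Subsingleton.elim X 0 ▸ L.zero_mem
  have hdiag : ∀ i, single i i (1 : R) - single z z 1 ∈ L := by
    intro i
    by_cases hiz : i = z
    · simp [hiz]
    · simpa [lie_single_single_swap] using L.lie_mem (h i z hiz) (h z i (Ne.symm hiz))
  rw [eq_sum_single_sub_single_of_trace_eq_zero hX z]
  refine sum_mem fun i _ => sum_mem fun j _ => ?_
  split_ifs with hij
  · exact L.smul_mem _ (hdiag i)
  · exact L.smul_mem _ (h i j hij)

theorem reflTransGen_of_mem_lieSpan {Adj : ι → ι → Prop} {S : Set (Matrix ι ι R)}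
    (hS : ∀ M ∈ S, ∀ a b, a ≠ b → M a b ≠ 0 → Adj a b) {M : Matrix ι ι R}
    (hM : M ∈ LieSubalgebra.lieSpan R _ S) {u v : ι} (huv : M u v ≠ 0) :
    Relation.ReflTransGen Adj u v := by
  set reach : ι → Prop := Relation.ReflTransGen Adj u
  -- With `False < True` on `Prop`, `BlockTriangular N reach` says `N i j = 0` whenever `i` is
  -- reachable from `u` and `j` is not.
  have hle : LieSubalgebra.lieSpan R _ S ≤
      lieSubalgebraOfSubalgebra R _ (blockTriangularSubalgebra R R reach) := by
    refine LieSubalgebra.lieSpan_le.mpr fun N hN i j hji => ?_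
    obtain ⟨-, hi, hj⟩ : _ ∧ reach i ∧ ¬ reach j := by simpa [lt_iff_le_not_ge] using hji
    by_contra hNij
    exact hj (hi.tail (hS N hN i j (fun hij => hj (hij ▸ hi)) hNij))
  by_contra hv
  exact huv (hle hM (lt_of_le_not_ge (fun _ => .refl) (fun h => hv (h .refl))))

end Matrix

theorem driftless_SLn_controllability_iff_strongly_connected_general
    (n m₁ m₂ : ℕ)
    (ijE : Fin m₁ → Fin n × Fin n) (hijE : ∀ k, (ijE k).1 ≠ (ijE k).2)
    (ijC : Fin m₂ → Fin n × Fin n) :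
    LieSubalgebra.lieSpan ℝ (Matrix (Fin n) (Fin n) ℝ)
        ((Set.range fun k => E (ijE k).1 (ijE k).2) ∪
          (Set.range fun k => C (ijC k).1 (ijC k).2)) = sl n ↔
      StronglyConnected (fun a b : Fin n => ∃ k, ijE k = (a, b)) := by
  constructor
  · intro h u v
    by_cases huv : u = v
    · exact huv ▸ .refl
    have hEuv : E u v ∈ sl n := trace_single_eq_of_ne u v 1 huv
    rw [← h] at hEuv
    refine reflTransGen_of_mem_lieSpan ?_ hEuv (by simp [E])
    rintro M (⟨k, rfl⟩ | ⟨k, rfl⟩) a b hab hM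
    · refine ⟨k, ?_⟩
      by_contra hne
      exact hM (single_apply_of_ne (c := 1) (h := fun ⟨h₁, h₂⟩ => hne (Prod.ext h₁ h₂)))
    · have hoffDiag : ∀ c, ¬(c = a ∧ c = b) := fun c ⟨hca, hcb⟩ => hab (hca ▸ hcb)
      simp [C, E, single_apply_of_ne (h := hoffDiag _)] at hM
  · intro hsc
    refine le_antisymm (LieSubalgebra.lieSpan_le.mpr ?_) (sl_le_of_single_mem _ fun a b hab =>
      single_mem_of_reflTransGen _ (fun a b ⟨k, hk⟩ => ?_) (hsc a b) hab)
    · rintro M (⟨k, rfl⟩ | ⟨k, rfl⟩)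
      · exact trace_single_eq_of_ne _ _ _ (hijE k)
      · change trace (C _ _) = 0
        simp [C, E]
    · exact LieSubalgebra.subset_lieSpan (Or.inl ⟨k, by simp [hk, E]⟩)

/-- Lie algebra rank condition for the driftless bilinear system on `SL(n)`:
the Lie algebra generated by the controlled terms equals `sl(n, ℝ)` iff the controlled
interaction digraph is strongly connected. -/
theorem driftless_SLn_controllability_iff_strongly_connected
    (n m₁ m₂ : ℕ) (hn : 1 ≤ n)
    (ijE : Fin m₁ → Fin n × Fin n) (hijE : ∀ k, (ijE k).1 ≠ (ijE k).2)
    (ijC : Fin m₂ → Fin n × Fin n) (hijC : ∀ k, (ijC k).1 ≠ (ijC k).2) :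
    LieSubalgebra.lieSpan ℝ (Matrix (Fin n) (Fin n) ℝ)
        ((Set.range fun k => E (ijE k).1 (ijE k).2) ∪
          (Set.range fun k => C (ijC k).1 (ijC k).2)) = sl n ↔
      StronglyConnected (fun a b : Fin n => ∃ k, ijE k = (a, b)) :=
  driftless_SLn_controllability_iff_strongly_connected_general n m₁ m₂ ijE hijE ijC
end

section
/- Let n ≥ 1, let A ∈ Matrix (Fin n) (Fin n) ℝ be traceless, let (i_1,j_1),…,(i_{m_1},j_{m_1}) be pairs in Fin n with i_k ≠ j_k, and let (i_{m_1+1},j_{m_1+1}),…,(i_{m_2},j_{m_2}) be further pairs with i_k ≠ j_k. Let G_contr be the digraph on Fin n whose arcs are exactly (i_1,j_1),…,(i_{m_1},j_{m_1}), and let G_drift be the digraph with an arc (i,j) exactly when i ≠ j and A i j ≠ 0. Suppose: (a) within each weakly connected component of G_contr every vertex is reachable from every other by a directed path in G_contr (i.e., whenever v is weakly connected to u, v is reachable from u); (b) every weakly connected component of G_contr contains at least two vertices; and (c) some weakly connected component of G_contr contains at least three vertices. Then the Lie subalgebra of Matrix (Fin n) (Fin n) ℝ generated by {A} ∪ {E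 i_1 j_1, …, E i_{m_1} j_{m_1}} ∪ {C i_{m_1+1} j_{m_1+1}, …, C i_{m_2} j_{m_2}} equals sl(n,ℝ) if and only if the union digraph G_drift ∪ G_contr (arcs are the union of the two arc sets) is strongly connected. (This is the Lie algebra rank condition characterizing accessibility of the bilinear system with drift A on SL(n).) -/
open Matrix

attribute [local instance 100] LieRing.ofAssociativeRing

/-- Two vertices are weakly connected if one is reachable from the other in the
symmetric closure of the adjacency relation. -/
def WeaklyConnected {V : Type*} (Adj : V → V → Prop) (u v : V) : Prop :=
  Relation.ReflTransGen (fun a b => Adj a b ∨ Adj b a) u v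

/-!
Call `u` linked to `v` in a Lie subalgebra `L` if `u = v` or `E u v ∈ L`. This is transitive
because `⁅E u v, E v w⁆ = E u w`, and `sl n ≤ L` as soon as all pairs of vertices are linked.

If `v` is not reachable from `u` in the union digraph, every generator, hence the whole generated
Lie algebra, is block triangular for the partition into vertices reachable from `u` and the rest,
so it misses `E u v`.

Conversely, the controlled arcs link any two vertices of a controlled component in both directions.
For a drift arc `w → s` between different classes, with partners `b` of `w` and `d` of `s`, the
bracket `⁅⁅E b w, A⁆, E s d⁆ = A w s • E b d + A d b • E s w` still mixes two arcs, and with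
two-element classes nothing separates them. Bracketing with `E c b` for a third vertex `c` of a
class of size at least three kills the second term. Hence a vertex `x` of that class stays linked
to the head of every arc whose tail it is linked to, and dually, so strong connectivity links all
pairs of vertices.
-/

section
variable {n : ℕ}

lemma E_mul_E_of_ne {a b c d : Fin n} (h : b ≠ c) : E a b * E c d = 0 :=
  single_mul_single_of_ne 1 a b c h 1

lemma lie_E_E {a b d : Fin n} (h : d ≠ a) : ⁅E a b, E b d⁆ = E a d := by
  rw [Ring.lie_def, E_mul_E_of_ne h, sub_zero, E, E, E, single_mul_single_same, one_mul]

lemma lie_E_E_eq_zero {a b c d : Fin n} (hbc : b ≠ c) (hda : d ≠ a) : ⁅E a b, E c d⁆ = 0 := by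
  rw [Ring.lie_def, E_mul_E_of_ne hbc, E_mul_E_of_ne hda, sub_zero]

lemma lie_E_E_swap (a b : Fin n) : ⁅E a b, E b a⁆ = C a b := by
  simp [E, C, Ring.lie_def]

lemma C_apply_of_ne (a b : Fin n) {i j : Fin n} (hij : i ≠ j) : C a b i j = 0 := by
  have h (c : Fin n) : ¬(c = i ∧ c = j) := fun h => hij (h.1.symm.trans h.2)
  simp [C, E, single_apply_of_ne _ _ _ _ _ (h _)]

lemma trace_C (a b : Fin n) : (C a b).trace = 0 := by
  simp [C, E]

lemma lie_lie_E_E (X : Matrix (Fin n) (Fin n) ℝ) {b w s d : Fin n} (hws : w ≠ s) (hdb : d ≠ b) :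
    ⁅⁅E b w, X⁆, E s d⁆ = X w s • E b d + X d b • E s w := by
  simp only [Ring.lie_def, sub_mul, mul_sub, ← mul_assoc, E_mul_E_of_ne hdb, zero_mul]
  simp only [mul_assoc, E_mul_E_of_ne hws, mul_zero, sub_zero, zero_sub, sub_neg_eq_add]
  simp only [← mul_assoc, E, single_mul_mul_single, smul_single, one_mul, mul_one, smul_eq_mul]

end

theorem Set.exists_mem_ne_ne_of_two_lt_ncard {α : Type*} {s : Set α} (hs : 2 < s.ncard)
    (a b : α) : ∃ c ∈ s, c ≠ a ∧ c ≠ b := by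
  have := pred_ncard_le_ncard_sdiff_singleton s a
  obtain ⟨c, ⟨hcs, hca⟩, hcb⟩ := Set.exists_ne_of_one_lt_ncard (s := s \ {a}) (by omega) b
  exact ⟨c, hcs, hca, hcb⟩

theorem WeaklyConnected.symm {V : Type*} {r : V → V → Prop} {u v : V}
    (h : WeaklyConnected r u v) : WeaklyConnected r v u :=
  symm_of (Relation.ReflTransGen (Relation.SymmGen r)) h

theorem LieSubalgebra.smul_mem_iff {K L : Type*} [Field K] [LieRing L] [LieAlgebra K L]
    (S : LieSubalgebra K L) {c : K} (hc : c ≠ 0) {x : L} : c • x ∈ S ↔ x ∈ S :=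
  S.toSubmodule.smul_mem_iff hc

theorem Relation.ReflTransGen.of_mem_lieSpan {ι R : Type*} [Fintype ι] [DecidableEq ι]
    [CommRing R] {r : ι → ι → Prop} {s : Set (Matrix ι ι R)}
    (hs : ∀ X ∈ s, ∀ i j, i ≠ j → X i j ≠ 0 → r i j) {X : Matrix ι ι R}
    (hX : X ∈ LieSubalgebra.lieSpan R _ s) {u v : ι} (huv : X u v ≠ 0) :
    Relation.ReflTransGen r u v := by
  by_contra hv
  -- Blocks are indexed by `Prop`, where `False < True`: block triangularity means that entries
  -- from rows reachable from `u` to unreachable columns vanish.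
  let reach : ι → Prop := Relation.ReflTransGen r u
  have hle : LieSubalgebra.lieSpan R _ s ≤
      lieSubalgebraOfSubalgebra R _ (blockTriangularSubalgebra R R reach) := by
    rw [LieSubalgebra.lieSpan_le]
    intro Y hY i j hji
    obtain ⟨hi, hj⟩ := Classical.not_imp.mp (lt_iff_le_not_ge.mp hji).2
    by_contra hYij
    exact hj (hi.tail (hs Y hY i j (by rintro rfl; exact hj hi) hYij))
  exact huv (hle hX (lt_iff_le_not_ge.mpr ⟨fun _ => .refl, fun h => hv (h .refl)⟩))

section
variable {n : ℕ} (L : LieSubalgebra ℝ (Matrix (Fin n) (Fin n) ℝ))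

def Linked (u v : Fin n) : Prop := u = v ∨ E u v ∈ L

variable {L} {A : Matrix (Fin n) (Fin n) ℝ} {u v w s x : Fin n}

theorem Linked.trans (huv : Linked L u v) (hvw : Linked L v w) : Linked L u w := by
  rcases huv with rfl | huv
  · exact hvw
  rcases hvw with rfl | hvw
  · exact Or.inr huv
  by_cases huw : u = w
  · exact Or.inl huw
  · exact Or.inr (lie_E_E (Ne.symm huw) ▸ L.lie_mem huv hvw)

theorem Linked.E_mem (h : Linked L u v) (huv : u ≠ v) : E u v ∈ L := h.resolve_left huv

theorem Linked.of_reflTransGen {r : Fin n → Fin n → Prop} (hr : ∀ a b, r a b → E a b ∈ L)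
    (h : Relation.ReflTransGen r u v) : Linked L u v := by
  induction h with
  | refl => exact Or.inl rfl
  | tail _ hab ih => exact ih.trans (Or.inr (hr _ _ hab))

theorem Linked.of_weaklyConnected {r : Fin n → Fin n → Prop} (hr : ∀ a b, r a b → E a b ∈ L)
    (hstrong : ∀ u v, WeaklyConnected r u v → Relation.ReflTransGen r u v)
    (h : WeaklyConnected r u v) : Linked L u v ∧ Linked L v u :=
  ⟨.of_reflTransGen hr (hstrong u v h), .of_reflTransGen hr (hstrong v u h.symm)⟩

theorem stronglyConnected_of_lieSpan_eq_sl {r : Fin n → Fin n → Prop}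
    {S : Set (Matrix (Fin n) (Fin n) ℝ)} (hS : ∀ X ∈ S, ∀ i j, i ≠ j → X i j ≠ 0 → r i j)
    (h : LieSubalgebra.lieSpan ℝ _ S = sl n) : StronglyConnected r := by
  intro u v
  by_cases huv : u = v
  · exact huv ▸ .refl
  have hE : E u v ∈ LieSubalgebra.lieSpan ℝ _ S := by
    rw [h]; exact trace_single_eq_of_ne u v 1 huv
  exact .of_mem_lieSpan hS hE (by simp [E])

theorem sl_le_of_E_mem (hE : ∀ u v, u ≠ v → E u v ∈ L) : sl n ≤ L := by
  intro X hX
  rcases isEmpty_or_nonempty (Fin n) with hn | ⟨⟨i₀⟩⟩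
  · exact Subsingleton.elim 0 X ▸ L.zero_mem
  have hF : ∀ i j, E i j - (if i = j then E i₀ i₀ else 0) ∈ L := by
    intro i j
    by_cases hij : i = j
    · subst hij
      by_cases hi : i = i₀
      · simp [hi]
      · simpa [lie_E_E_swap, C] using L.lie_mem (hE _ _ hi) (hE _ _ (Ne.symm hi))
    · simpa [hij] using hE i j hij
  -- Replacing each `E i i` by `E i i - E i₀ i₀` changes nothing, as `trace X = 0`.
  have hX' : X = ∑ i, ∑ j, X i j • (E i j - if i = j then E i₀ i₀ else 0) := by
    simp only [smul_sub, Finset.sum_sub_distrib, smul_ite, smul_zero, Finset.sum_ite_eq,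
      Finset.mem_univ, if_true, ← Finset.sum_smul]
    rw [show ∑ i, X i i = 0 from hX, zero_smul, sub_zero]
    simpa [E] using matrix_eq_sum_single X
  rw [hX']
  exact sum_mem fun i _ => sum_mem fun j _ => L.smul_mem _ (hF i j)

variable (hA : A ∈ L) (hpartner : ∀ v, ∃ b ≠ v, Linked L v b ∧ Linked L b v)
  (hx : ∀ w b, ∃ c, c ≠ w ∧ c ≠ b ∧ Linked L x c ∧ Linked L c x)
include hA hpartner hx

theorem Linked.drift_right (hxw : Linked L x w) (hws : w ≠ s) (hAws : A w s ≠ 0) :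
    Linked L x s := by
  by_cases hlink : Linked L w s
  · exact hxw.trans hlink
  obtain ⟨b, hbw, hwb, hbw'⟩ := hpartner w
  obtain ⟨d, hds, hsd, hds'⟩ := hpartner s
  obtain ⟨c, hcw, hcb, hxc, hcx⟩ := hx w b
  have hbs : b ≠ s := by rintro rfl; exact hlink hwb
  have hdb : d ≠ b := by rintro rfl; exact hlink (hwb.trans hds')
  by_cases hcs : c = s
  · exact hcs ▸ hxc
  by_cases hcd : c = d
  · exact hxc.trans (hcd ▸ hds')
  have hEcb : E c b ∈ L :=
    lie_E_E hcb.symm ▸ L.lie_mem ((hcx.trans hxw).E_mem hcw) (hwb.E_mem hbw.symm)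
  have hT := L.lie_mem hEcb (L.lie_mem (L.lie_mem (hbw'.E_mem hbw) hA) (hsd.E_mem hds.symm))
  rw [lie_lie_E_E A hws hdb, lie_add, lie_smul, lie_smul, lie_E_E (Ne.symm hcd),
    lie_E_E_eq_zero hbs hcw.symm, smul_zero, add_zero, L.smul_mem_iff hAws] at hT
  exact hxc.trans (Or.inr (lie_E_E (Ne.symm hcs) ▸ L.lie_mem hT (hds'.E_mem hds)))

theorem Linked.drift_left (hwx : Linked L w x) (hsw : s ≠ w) (hAsw : A s w ≠ 0) :
    Linked L s x := by
  by_cases hlink : Linked L s w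
  · exact hlink.trans hwx
  obtain ⟨b, hbw, hwb, hbw'⟩ := hpartner w
  obtain ⟨d, hds, hsd, hds'⟩ := hpartner s
  obtain ⟨c, hcw, hcb, hxc, hcx⟩ := hx w b
  have hbs : b ≠ s := by rintro rfl; exact hlink hbw'
  have hbd : b ≠ d := by rintro rfl; exact hlink (hsd.trans hbw')
  by_cases hcs : c = s
  · exact hcs ▸ hcx
  by_cases hcd : c = d
  · exact hsd.trans (hcd ▸ hcx)
  have hEbc : E b c ∈ L :=
    lie_E_E hcb ▸ L.lie_mem (hbw'.E_mem hbw) ((hwx.trans hxc).E_mem hcw.symm)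
  have hT := L.lie_mem (L.lie_mem (L.lie_mem (hds'.E_mem hds) hA) (hwb.E_mem hbw.symm)) hEbc
  rw [lie_lie_E_E A hsw hbd, add_lie, smul_lie, smul_lie, lie_E_E hcd,
    lie_E_E_eq_zero hbs.symm hcw, smul_zero, add_zero, L.smul_mem_iff hAsw] at hT
  exact Linked.trans (Or.inr (lie_E_E hcs ▸ L.lie_mem (hsd.E_mem hds.symm) hT)) hcx

theorem sl_le_of_stronglyConnected
    (hSC : StronglyConnected fun a b => (a ≠ b ∧ A a b ≠ 0) ∨ E a b ∈ L) : sl n ≤ L := by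
  have hfrom : ∀ v, Linked L x v := fun v => by
    induction hSC x v with
    | refl => exact Or.inl rfl
    | tail _ hws ih =>
      rcases hws with ⟨hws, hAws⟩ | hE
      · exact ih.drift_right hA hpartner hx hws hAws
      · exact ih.trans (Or.inr hE)
  have hto : ∀ v, Linked L v x := fun v => by
    induction hSC v x using Relation.ReflTransGen.head_induction_on with
    | refl => exact Or.inl rfl
    | head hsw _ ih =>
      rcases hsw with ⟨hsw, hAsw⟩ | hE
      · exact ih.drift_left hA hpartner hx hsw hAsw
      · exact Linked.trans (Or.inr hE) ih
  exact sl_le_of_E_mem fun u v huv => ((hto u).trans (hfrom v)).E_mem huv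

end

theorem SLn_accessibility_iff_union_strongly_connected_general
    (n m₁ m₂ : ℕ)
    (A : Matrix (Fin n) (Fin n) ℝ) (hA : A.trace = 0)
    (ijE : Fin m₁ → Fin n × Fin n) (hijE : ∀ k, (ijE k).1 ≠ (ijE k).2)
    (ijC : Fin m₂ → Fin n × Fin n)
    (contrAdj driftAdj : Fin n → Fin n → Prop)
    (hcontr : contrAdj = fun a b => ∃ k, ijE k = (a, b))
    (hdrift : driftAdj = fun a b => a ≠ b ∧ A a b ≠ 0)
    (ha : ∀ u v : Fin n, WeaklyConnected contrAdj u v → Relation.ReflTransGen contrAdj u v)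
    (hb : ∀ v : Fin n, 2 ≤ {u : Fin n | WeaklyConnected contrAdj v u}.ncard)
    (hc : ∃ v : Fin n, 3 ≤ {u : Fin n | WeaklyConnected contrAdj v u}.ncard) :
    LieSubalgebra.lieSpan ℝ (Matrix (Fin n) (Fin n) ℝ)
        ({A} ∪ (Set.range fun k => E (ijE k).1 (ijE k).2) ∪
          (Set.range fun k => C (ijC k).1 (ijC k).2)) = sl n ↔
      StronglyConnected (fun a b : Fin n => driftAdj a b ∨ contrAdj a b) := by
  subst hcontr hdrift
  set L := LieSubalgebra.lieSpan ℝ (Matrix (Fin n) (Fin n) ℝ)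
    ({A} ∪ (Set.range fun k => E (ijE k).1 (ijE k).2) ∪ Set.range fun k => C (ijC k).1 (ijC k).2)
  have hEL : ∀ a b, (∃ k, ijE k = (a, b)) → E a b ∈ L := by
    rintro a b ⟨k, hk⟩
    exact LieSubalgebra.subset_lieSpan (Or.inl (Or.inr ⟨k, by simp [hk]⟩))
  constructor
  · refine stronglyConnected_of_lieSpan_eq_sl ?_
    rintro X ((rfl | ⟨k, rfl⟩) | ⟨k, rfl⟩) i j hij hX
    · exact Or.inl ⟨hij, hX⟩
    · simp [E, single_apply] at hX
      exact Or.inr ⟨k, Prod.ext hX.1 hX.2⟩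
    · exact absurd (C_apply_of_ne _ _ hij) hX
  · intro hSC
    obtain ⟨r, hr⟩ := hc
    refine le_antisymm (LieSubalgebra.lieSpan_le.mpr ?_)
      (sl_le_of_stronglyConnected (A := A) (x := r) (LieSubalgebra.subset_lieSpan (by simp)) ?_ ?_
        fun u v => Relation.ReflTransGen.mono ?_ u v (hSC u v))
    · rintro X ((rfl | ⟨k, rfl⟩) | ⟨k, rfl⟩)
      exacts [hA, trace_single_eq_of_ne _ _ _ (hijE k), trace_C _ _]
    · intro v
      obtain ⟨b, hb, hbv⟩ := Set.exists_ne_of_one_lt_ncard (hb v) v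
      exact ⟨b, hbv, Linked.of_weaklyConnected hEL ha hb⟩
    · intro w b
      obtain ⟨c, hc, hcw, hcb⟩ := Set.exists_mem_ne_ne_of_two_lt_ncard hr w b
      exact ⟨c, hcw, hcb, Linked.of_weaklyConnected hEL ha hc⟩
    · rintro a b (h | h)
      exacts [Or.inl h, Or.inr (hEL a b h)]

/-- Lie algebra rank condition for the bilinear system with drift on `SL(n)`:
under the stated assumptions on the weakly connected components of the controlled
interaction digraph, the generated Lie algebra equals `sl(n, ℝ)` iff the union of the
drift and controlled interaction digraphs is strongly connected. -/
theorem SLn_accessibility_iff_union_strongly_connected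
    (n m₁ m₂ : ℕ) (hn : 1 ≤ n)
    (A : Matrix (Fin n) (Fin n) ℝ) (hA : A.trace = 0)
    (ijE : Fin m₁ → Fin n × Fin n) (hijE : ∀ k, (ijE k).1 ≠ (ijE k).2)
    (ijC : Fin m₂ → Fin n × Fin n) (hijC : ∀ k, (ijC k).1 ≠ (ijC k).2)
    (contrAdj driftAdj : Fin n → Fin n → Prop)
    (hcontr : contrAdj = fun a b => ∃ k, ijE k = (a, b))
    (hdrift : driftAdj = fun a b => a ≠ b ∧ A a b ≠ 0)
    (ha : ∀ u v : Fin n, WeaklyConnected contrAdj u v → Relation.ReflTransGen contrAdj u v)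
    (hb : ∀ v : Fin n, 2 ≤ {u : Fin n | WeaklyConnected contrAdj v u}.ncard)
    (hc : ∃ v : Fin n, 3 ≤ {u : Fin n | WeaklyConnected contrAdj v u}.ncard) :
    LieSubalgebra.lieSpan ℝ (Matrix (Fin n) (Fin n) ℝ)
        ({A} ∪ (Set.range fun k => E (ijE k).1 (ijE k).2) ∪
          (Set.range fun k => C (ijC k).1 (ijC k).2)) = sl n ↔
      StronglyConnected (fun a b : Fin n => driftAdj a b ∨ contrAdj a b) :=
  SLn_accessibility_iff_union_strongly_connected_general n m₁ m₂ A hA ijE hijE ijC contrAdj driftAdj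
    hcontr hdrift ha hb hc
end

section
/- Let V be a finite nonempty vertex type and G a simple graph on V. Define the transitive closure mapping M sending a simple graph H to the simple graph M(H) with adjacency: i and k are adjacent in M(H) iff i ≠ k and (they are adjacent in H, or there exists j with {i,j} and {j,k} edges of H). Then G is connected if and only if there exists a positive integer z such that the z-fold iterate M^z(G) is the complete graph (⊤ : SimpleGraph V). -/
/-- The graph transitive closure mapping `M`: vertices `i` and `k` are adjacent in
`M(H)` iff `i ≠ k` and either they are adjacent in `H`, or there is a common
neighbor `j`. -/
def M {V : Type*} (H : SimpleGraph V) : SimpleGraph V where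
  Adj i k := i ≠ k ∧ (H.Adj i k ∨ ∃ j, H.Adj i j ∧ H.Adj j k)
  symm := by
    constructor
    intro i k h
    obtain ⟨hne, h⟩ := h
    refine ⟨hne.symm, ?_⟩
    rcases h with h | ⟨j, h1, h2⟩
    · exact Or.inl h.symm
    · exact Or.inr ⟨j, h2.symm, h1.symm⟩
  loopless := ⟨fun i h => h.1 rfl⟩

/-!
`M` preserves reachability, so an iterate equal to `⊤` forces `G` to be connected.
Conversely, `M` turns walks of length at most `2` into edges (or equalities), so by splitting
a walk in the middle, two vertices joined by a walk of length at most `2 ^ n` are equal or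
adjacent in `M^[n] G`. A path in a connected graph has length less than
`card V < 2 ^ card V`, hence `M^[card V] G = ⊤`.
-/

namespace SimpleGraph

open Relation

variable {V : Type*} {H : SimpleGraph V} {u v w : V}

lemma Adj.reachable_of_M (h : (M H).Adj u v) : H.Reachable u v := by
  obtain ⟨-, h | ⟨w, huw, hwv⟩⟩ := h
  exacts [h.reachable, huw.reachable.trans hwv.reachable]

lemma Reachable.of_M (h : (M H).Reachable u v) : H.Reachable u v := by
  obtain ⟨p⟩ := h
  induction p with
  | nil => rfl
  | cons hadj _ ih => exact hadj.reachable_of_M.trans ih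

lemma Reachable.of_iterate_M (n : ℕ) (h : (M^[n] H).Reachable u v) : H.Reachable u v := by
  induction n generalizing u v with
  | zero => exact h
  | succ n ih =>
    rw [Function.iterate_succ_apply'] at h
    exact ih h.of_M

lemma reflGen_M_adj_of_reflGen (huw : ReflGen H.Adj u w) (hwv : ReflGen H.Adj w v) :
    ReflGen (M H).Adj u v := by
  by_cases huv : u = v
  · exact huv ▸ ReflGen.refl
  refine ReflGen.single ⟨huv, ?_⟩
  rcases huw with _ | huw <;> rcases hwv with _ | hwv
  · exact absurd rfl huv
  · exact Or.inl hwv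
  · exact Or.inl huw
  · exact Or.inr ⟨w, huw, hwv⟩

lemma reflGen_iterate_M_adj_of_length_le (n : ℕ) (p : H.Walk u v) (hp : p.length ≤ 2 ^ n) :
    ReflGen (M^[n] H).Adj u v := by
  induction n generalizing u v with
  | zero =>
    cases p with
    | nil => exact ReflGen.refl
    | cons hadj q =>
      rw [Walk.length_cons, pow_zero] at hp
      obtain rfl := q.eq_of_length_eq_zero (by omega)
      exact ReflGen.single hadj
  | succ n ih =>
    rw [Function.iterate_succ_apply']
    refine reflGen_M_adj_of_reflGen (ih (p.take (2 ^ n)) ?_) (ih (p.drop (2 ^ n)) ?_)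
    · simp [Walk.take_length]
    · rw [Walk.drop_length, pow_succ] at *
      omega

end SimpleGraph

open SimpleGraph in
/-- A simple graph on a finite nonempty vertex type is connected iff some positive
iterate of the transitive closure mapping `M` is the complete graph. -/
theorem connected_iff_iterate_M_eq_top
    {V : Type*} [Fintype V] [Nonempty V] (G : SimpleGraph V) :
    G.Connected ↔ ∃ z : ℕ, 0 < z ∧ M^[z] G = ⊤ := by
  refine ⟨fun hG => ⟨Fintype.card V, Fintype.card_pos, ?_⟩, fun ⟨z, _, h⟩ => ?_⟩
  · refine eq_top_iff.2 fun u v huv => ?_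
    obtain ⟨p, hp⟩ := hG.exists_isPath u v
    have hlen : p.length ≤ 2 ^ Fintype.card V := (hp.length_lt.trans Nat.lt_two_pow_self).le
    rcases reflGen_iterate_M_adj_of_length_le _ p hlen with _ | hadj
    exacts [absurd rfl huv, hadj]
  · refine ⟨fun u v => Reachable.of_iterate_M z ?_⟩
    rw [h]
    exact connected_top.preconnected u v
end

section
/- Let X and Y be disjoint finite sets of vertices with |X| ≥ 3 and |Y| ≥ 3, and let G be a simple graph on V = X ∪ Y all of whose edges join a vertex of X to a vertex of Y (a bi-graph with parts X and Y), with at least one edge. Then there exist an integer z ≥ 1 and a finite sequence of vertex pairs (i_1,j_1),…,(i_z,j_z) with i_s ≠ j_s such that: (i) for each s, either both i_s, j_s ∈ X or both i_s, j_s ∈ Y; and (ii) the iterated circumjacent closure H_{i_z j_z}(⋯ H_{i_2 j_2}(H_{i_1 j_1}(G)) ⋯) is again a graph all of whose edges join X to Y, and it has exactly one edge. -/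
/-!
A closure at `(i, j)` keeps only edges at `i` and `j`, so a third vertex with no neighbour
among `i, j` becomes isolated, and a closure at `(i, j)` with `j` isolated is the star from
`j` onto the neighbours of `i`. Hence for an edge `uv` (`u ∈ X`, `v ∈ Y`) and distinct
`j, k ∈ X \ {u}`, the closures at `(u, j)` and then `(j, k)` turn `G` into the star from `k`
onto `N(u) ∋ v`. Repeating this with distinct `t, r ∈ Y \ {v}` moves the neighbourhood `{k}`
of `v` to `r`, leaving the single edge `rk`.
-/

/-- The circumjacent closure of a simple graph `G` at a pair of vertices `i, j`:
its edges are exactly `{i, x}` for `x` a neighbor of `j`, and `{j, x}` for `x` a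
neighbor of `i` (with a guard `a ≠ b` ensuring irreflexivity; when `{i, j}` is not an
edge of `G` this guard is automatic). -/
def circClosure {V : Type*} (G : SimpleGraph V) (i j : V) : SimpleGraph V where
  Adj a b := a ≠ b ∧
    ((a = i ∧ G.Adj j b) ∨ (b = i ∧ G.Adj j a) ∨ (a = j ∧ G.Adj i b) ∨ (b = j ∧ G.Adj i a))
  symm := by
    constructor
    intro a b h
    obtain ⟨hne, h⟩ := h
    exact ⟨hne.symm, by tauto⟩
  loopless := ⟨fun a h => h.1 rfl⟩

/-- A graph is a bi-graph with parts `X` and `Y` if every edge joins a vertex of `X`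
to a vertex of `Y`. -/
def IsBigraph {V : Type*} (G : SimpleGraph V) (X Y : Set V) : Prop :=
  ∀ a b : V, G.Adj a b → (a ∈ X ∧ b ∈ Y) ∨ (a ∈ Y ∧ b ∈ X)

theorem Set.exists_ne_ne_of_three_le_ncard {α : Type*} {s : Set α} (hs : 3 ≤ s.ncard)
    (a : α) : ∃ b ∈ s, ∃ c ∈ s, b ≠ a ∧ c ≠ a ∧ b ≠ c := by
  have hfin : s.Finite := Set.finite_of_ncard_ne_zero (by omega)
  have hdiff : 1 < (s \ {a}).ncard := by
    have := Set.pred_ncard_le_ncard_sdiff_singleton s a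
    omega
  obtain ⟨b, c, ⟨hb, hba⟩, ⟨hc, hca⟩, hbc⟩ := (Set.one_lt_ncard_iff hfin.sdiff).1 hdiff
  exact ⟨b, hb, c, hc, hba, hca, hbc⟩

section IsBigraph

variable {V : Type*} {G : SimpleGraph V} {X Y : Set V}

theorem IsBigraph.symm (hG : IsBigraph G X Y) : IsBigraph G Y X :=
  fun a b h => (hG a b h).symm

theorem IsBigraph.not_adj_of_mem_left (hG : IsBigraph G X Y) (hXY : Disjoint X Y)
    {a b : V} (ha : a ∈ X) (hb : b ∈ X) : ¬ G.Adj a b := by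
  intro h
  rcases hG a b h with ⟨-, hbY⟩ | ⟨haY, -⟩
  · exact hXY.ne_of_mem hb hbY rfl
  · exact hXY.ne_of_mem ha haY rfl

theorem IsBigraph.exists_adj_of_edgeSet_nonempty (hG : IsBigraph G X Y)
    (hE : G.edgeSet.Nonempty) : ∃ u ∈ X, ∃ v ∈ Y, G.Adj u v := by
  obtain ⟨e, he⟩ := hE
  induction e using Sym2.ind with
  | _ a b =>
    have he : G.Adj a b := he
    rcases hG a b he with ⟨ha, hb⟩ | ⟨ha, hb⟩
    · exact ⟨a, ha, b, hb, he⟩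
    · exact ⟨b, hb, a, ha, he.symm⟩

theorem isBigraph_edge {x y : V} (hx : x ∈ X) (hy : y ∈ Y) :
    IsBigraph (SimpleGraph.edge x y) X Y := by
  intro a b h
  rcases (SimpleGraph.edge_adj x y a b).1 h with ⟨⟨rfl, rfl⟩ | ⟨rfl, rfl⟩, -⟩
  · exact Or.inl ⟨hx, hy⟩
  · exact Or.inr ⟨hy, hx⟩

end IsBigraph

theorem SimpleGraph.eq_edge_of_adj_iff {V : Type*} {H : SimpleGraph V} {x y : V}
    (h : ∀ a b, H.Adj a b ↔ (a = x ∧ b = y) ∨ (b = x ∧ a = y)) : H = SimpleGraph.edge x y := by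
  have hxy : x ≠ y := by
    rintro rfl
    exact H.loopless.irrefl x ((h x x).2 (Or.inl ⟨rfl, rfl⟩))
  ext a b
  rw [h, SimpleGraph.edge_adj]
  constructor
  · rintro (⟨rfl, rfl⟩ | ⟨rfl, rfl⟩)
    exacts [⟨Or.inl ⟨rfl, rfl⟩, hxy⟩, ⟨Or.inr ⟨rfl, rfl⟩, hxy.symm⟩]
  · rintro ⟨⟨rfl, rfl⟩ | ⟨rfl, rfl⟩, -⟩
    exacts [Or.inl ⟨rfl, rfl⟩, Or.inr ⟨rfl, rfl⟩]

section circClosure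

variable {V : Type*} {G : SimpleGraph V} {i j : V}

theorem circClosure_adj_right (h : ¬ G.Adj i j) (b : V) :
    (circClosure G i j).Adj j b ↔ G.Adj i b := by
  refine ⟨?_, fun hb => ⟨fun hjb => h (hjb ▸ hb), Or.inr (Or.inr (Or.inl ⟨rfl, hb⟩))⟩⟩
  rintro ⟨hne, ⟨rfl, hb⟩ | ⟨-, hjj⟩ | ⟨-, hb⟩ | ⟨rfl, -⟩⟩
  · exact hb
  · exact absurd hjj (G.loopless.irrefl j)
  · exact hb
  · exact absurd rfl hne

theorem isIsolated_circClosure {x : V} (hxi : x ≠ i) (hxj : x ≠ j)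
    (hi : ¬ G.Adj i x) (hj : ¬ G.Adj j x) : (circClosure G i j).IsIsolated x := by
  rintro b ⟨-, ⟨hx, -⟩ | ⟨-, hjx⟩ | ⟨hx, -⟩ | ⟨-, hix⟩⟩
  exacts [hxi hx, hj hjx, hxj hx, hi hix]

theorem circClosure_adj_of_isIsolated (hj : G.IsIsolated j) (a b : V) :
    (circClosure G i j).Adj a b ↔ (a = j ∧ G.Adj i b) ∨ (b = j ∧ G.Adj i a) := by
  constructor
  · rintro ⟨-, ⟨-, hjb⟩ | ⟨-, hja⟩ | hstar | hstar⟩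
    exacts [absurd hjb (hj b), absurd hja (hj a), Or.inl hstar, Or.inr hstar]
  · rintro (⟨rfl, hib⟩ | ⟨rfl, hia⟩)
    · exact ⟨by rintro rfl; exact hj _ hib.symm, Or.inr (Or.inr (Or.inl ⟨rfl, hib⟩))⟩
    · exact ⟨by rintro rfl; exact hj _ hia.symm, Or.inr (Or.inr (Or.inr ⟨rfl, hia⟩))⟩

theorem circClosure_circClosure_adj {u k : V} (hku : k ≠ u) (hkj : k ≠ j)
    (huj : ¬ G.Adj u j) (huk : ¬ G.Adj u k) (hjk : ¬ G.Adj j k) (a b : V) :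
    (circClosure (circClosure G u j) j k).Adj a b ↔
      (a = k ∧ G.Adj u b) ∨ (b = k ∧ G.Adj u a) := by
  rw [circClosure_adj_of_isIsolated (isIsolated_circClosure hku hkj huk hjk),
    circClosure_adj_right huj, circClosure_adj_right huj]

end circClosure

theorem bigraph_reduction_to_single_edge_general
    {V : Type*} (X Y : Set V) (G : SimpleGraph V)
    (hdisj : Disjoint X Y)
    (hX : 3 ≤ X.ncard) (hY : 3 ≤ Y.ncard)
    (hbi : IsBigraph G X Y) (hedge : 1 ≤ G.edgeSet.ncard) :
    ∃ L : List (V × V), L ≠ [] ∧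
      (∀ p ∈ L, p.1 ≠ p.2 ∧ ((p.1 ∈ X ∧ p.2 ∈ X) ∨ (p.1 ∈ Y ∧ p.2 ∈ Y))) ∧
      IsBigraph (L.foldl (fun H p => circClosure H p.1 p.2) G) X Y ∧
      (L.foldl (fun H p => circClosure H p.1 p.2) G).edgeSet.ncard = 1 := by
  obtain ⟨u, hu, v, hv, huv⟩ :=
    hbi.exists_adj_of_edgeSet_nonempty (Set.nonempty_of_ncard_ne_zero (by omega))
  obtain ⟨j, hj, k, hk, hju, hku, hjk⟩ := Set.exists_ne_ne_of_three_le_ncard hX u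
  obtain ⟨t, ht, r, hr, htv, hrv, htr⟩ := Set.exists_ne_ne_of_three_le_ncard hY v
  have hXX : ∀ {a b}, a ∈ X → b ∈ X → ¬ G.Adj a b := hbi.not_adj_of_mem_left hdisj
  set G₂ := circClosure (circClosure G u j) j k
  have hG₂ : ∀ a b, G₂.Adj a b ↔ (a = k ∧ G.Adj u b) ∨ (b = k ∧ G.Adj u a) :=
    circClosure_circClosure_adj hku hjk.symm (hXX hu hj) (hXX hu hk) (hXX hj hk)
  have hYY₂ : ∀ {a b}, a ∈ Y → b ∈ Y → ¬ G₂.Adj a b := by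
    intro a b ha hb h
    rcases (hG₂ a b).1 h with ⟨rfl, -⟩ | ⟨rfl, -⟩
    exacts [hdisj.ne_of_mem hk ha rfl, hdisj.ne_of_mem hk hb rfl]
  have hv₂ : ∀ b, G₂.Adj v b ↔ b = k := fun b => by
    simp [hG₂, (hdisj.ne_of_mem hk hv).symm, huv]
  have hG₄ : [(u, j), (j, k), (v, t), (t, r)].foldl (fun H p => circClosure H p.1 p.2) G =
      SimpleGraph.edge r k := SimpleGraph.eq_edge_of_adj_iff fun a b =>
    (circClosure_circClosure_adj hrv htr.symm (hYY₂ hv ht) (hYY₂ hv hr) (hYY₂ ht hr) a b).trans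
      (by rw [hv₂, hv₂])
  refine ⟨[(u, j), (j, k), (v, t), (t, r)], List.cons_ne_nil _ _, ?_, ?_, ?_⟩
  · simp only [List.mem_cons, List.not_mem_nil, or_false]
    rintro p (rfl | rfl | rfl | rfl)
    exacts [⟨hju.symm, Or.inl ⟨hu, hj⟩⟩, ⟨hjk, Or.inl ⟨hj, hk⟩⟩,
      ⟨htv.symm, Or.inr ⟨hv, ht⟩⟩, ⟨htr, Or.inr ⟨ht, hr⟩⟩]
  · rw [hG₄]
    exact (isBigraph_edge hr hk).symm
  · rw [hG₄, SimpleGraph.edgeSet_edge_of_ne (hdisj.ne_of_mem hk hr).symm, Set.ncard_singleton]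

/-- For a bi-graph with parts of size at least three and at least one edge, there is a
nonempty finite sequence of vertex pairs, each pair lying within a single part, such
that the iterated circumjacent closure along this sequence is again a bi-graph with
exactly one edge. -/
theorem bigraph_reduction_to_single_edge
    {V : Type*} [Fintype V] (X Y : Set V) (G : SimpleGraph V)
    (hdisj : Disjoint X Y) (hunion : X ∪ Y = Set.univ)
    (hX : 3 ≤ X.ncard) (hY : 3 ≤ Y.ncard)
    (hbi : IsBigraph G X Y) (hedge : 1 ≤ G.edgeSet.ncard) :
    ∃ L : List (V × V), L ≠ [] ∧
      (∀ p ∈ L, p.1 ≠ p.2 ∧ ((p.1 ∈ X ∧ p.2 ∈ X) ∨ (p.1 ∈ Y ∧ p.2 ∈ Y))) ∧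
      IsBigraph (L.foldl (fun H p => circClosure H p.1 p.2) G) X Y ∧
      (L.foldl (fun H p => circClosure H p.1 p.2) G).edgeSet.ncard = 1 :=
  bigraph_reduction_to_single_edge_general X Y G hdisj hX hY hbi hedge
end

section
/- Let V be a finite nonempty vertex type and G a simple digraph on V (an irreflexive relation). Define the simple digraph transitive closure mapping M sending a simple digraph H to the simple digraph M(H) with arcs: (i,k) is an arc of M(H) iff i ≠ k and ((i,k) is an arc of H, or there exists j with (i,j) and (j,k) arcs of H). Then there exists a positive integer z such that the z-fold iterate M^z(G) is the simple complete digraph (arc set { (i,k) : i ≠ k }) if and only if G is strongly connected. -/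
/-!
`Md` preserves the reachability relation, so every iterate of `G` is strongly connected exactly
when `G` is, and the complete digraph is strongly connected. Conversely, from the first iterate
on, `Md` only adds arcs, so on a finite vertex type the iterates reach a fixed point `H = Md H`.
Such an `H` is transitive off the diagonal, hence if it is strongly connected it contains every
arc `(i, k)` with `i ≠ k`.
-/

/-- The simple digraph transitive closure mapping `M`: `(i, k)` is an arc of `M(H)`
iff `i ≠ k` and either `(i, k)` is an arc of `H` or there is `j` with `(i, j)` and
`(j, k)` arcs of `H`. -/
def Md {V : Type*} (H : V → V → Prop) : V → V → Prop :=
  fun i k => i ≠ k ∧ (H i k ∨ ∃ j, H i j ∧ H j k)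

section

variable {V : Type*}

lemma Md_le_reflTransGen (H : V → V → Prop) : Md H ≤ Relation.ReflTransGen H := by
  rintro i k ⟨-, hik | ⟨j, hij, hjk⟩⟩
  · exact .single hik
  · exact .head hij (.single hjk)

lemma le_reflTransGen_Md (H : V → V → Prop) : H ≤ Relation.ReflTransGen (Md H) := by
  intro i k hik
  by_cases h : i = k
  · exact h ▸ .refl
  · exact .single ⟨h, .inl hik⟩

lemma reflTransGen_Md (H : V → V → Prop) :
    Relation.ReflTransGen (Md H) = Relation.ReflTransGen H :=
  le_antisymm (Relation.reflTransGen_closed (Md_le_reflTransGen H))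
    (Relation.reflTransGen_closed (le_reflTransGen_Md H))

lemma stronglyConnected_iterate_Md_iff (H : V → V → Prop) (z : ℕ) :
    StronglyConnected (Md^[z] H) ↔ StronglyConnected H := by
  induction z with
  | zero => rfl
  | succ z ih =>
    rw [Function.iterate_succ_apply', ← ih, StronglyConnected, StronglyConnected,
      reflTransGen_Md]

lemma stronglyConnected_ne : StronglyConnected (fun i k : V => i ≠ k) := by
  intro u v
  by_cases h : u = v
  · exact h ▸ .refl
  · exact .single h

lemma Md_irrefl (H : V → V → Prop) (i : V) : ¬Md H i i :=
  fun h => h.1 rfl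

lemma le_Md_of_irrefl {H : V → V → Prop} (hH : ∀ i, ¬H i i) : H ≤ Md H :=
  fun i _ hik => ⟨fun h => hH i (h ▸ hik), .inl hik⟩

lemma monotone_iterate_succ_Md (H : V → V → Prop) : Monotone fun n => Md^[n + 1] H := by
  refine monotone_nat_of_le_succ fun n => ?_
  rw [Function.iterate_succ_apply' Md (n + 1)]
  exact le_Md_of_irrefl (Function.iterate_succ_apply' Md n H ▸ Md_irrefl _)

lemma exists_pos_isFixedPt_iterate_Md [Finite V] (H : V → V → Prop) :
    ∃ z, 0 < z ∧ Function.IsFixedPt Md (Md^[z] H) := by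
  obtain ⟨n, hn⟩ :=
    WellFoundedGT.monotone_chain_condition ⟨_, monotone_iterate_succ_Md H⟩
  refine ⟨n + 1, n.succ_pos, ?_⟩
  show Md (Md^[n + 1] H) = Md^[n + 1] H
  rw [← Function.iterate_succ_apply' Md]
  exact (hn (n + 1) n.le_succ).symm

lemma eq_or_of_reflTransGen_of_isFixedPt_Md {H : V → V → Prop} (hH : Function.IsFixedPt Md H)
    {i k : V} (hik : Relation.ReflTransGen H i k) : i = k ∨ H i k := by
  induction hik with
  | refl => exact .inl rfl
  | @tail j k _ hjk ih =>
    rcases ih with rfl | hij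
    · exact .inr hjk
    · by_cases h : i = k
      · exact .inl h
      · exact .inr (hH.eq ▸ ⟨h, .inr ⟨j, hij, hjk⟩⟩)

lemma eq_ne_of_isFixedPt_Md {H : V → V → Prop} (hH : Function.IsFixedPt Md H)
    (hSC : StronglyConnected H) : H = fun i k => i ≠ k := by
  ext i k
  refine ⟨fun hik => ?_, fun hne => ?_⟩
  · rw [← hH.eq] at hik
    exact hik.1
  · exact (eq_or_of_reflTransGen_of_isFixedPt_Md hH (hSC i k)).resolve_left hne

end

theorem iterate_Md_eq_complete_iff_strongly_connected_general
    {V : Type*} [Fintype V] (G : V → V → Prop) :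
    (∃ z : ℕ, 0 < z ∧ Md^[z] G = fun i k : V => i ≠ k) ↔ StronglyConnected G := by
  constructor
  · rintro ⟨z, -, hz⟩
    rw [← stronglyConnected_iterate_Md_iff G z, hz]
    exact stronglyConnected_ne
  · intro hSC
    obtain ⟨z, hz, hfix⟩ := exists_pos_isFixedPt_iterate_Md G
    exact ⟨z, hz, eq_ne_of_isFixedPt_Md hfix ((stronglyConnected_iterate_Md_iff G z).2 hSC)⟩

/-- For a simple digraph on a finite nonempty vertex type, some positive iterate of
the transitive closure mapping `Md` is the simple complete digraph iff the digraph is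
strongly connected. -/
theorem iterate_Md_eq_complete_iff_strongly_connected
    {V : Type*} [Fintype V] [Nonempty V] (G : V → V → Prop) (hG : Irreflexive G) :
    (∃ z : ℕ, 0 < z ∧ Md^[z] G = fun i k : V => i ≠ k) ↔ StronglyConnected G :=
  iterate_Md_eq_complete_iff_strongly_connected_general G
end

section
/- Let n ≥ 1 and let S be a set of matrices of the form E i j with i ≠ j in Fin n (i.e., S ⊆ { E i j : i ≠ j }). If the digraph on Fin n whose arcs are exactly the pairs (i,j) with E i j ∈ S is strongly connected, then the Lie subalgebra of Matrix (Fin n) (Fin n) ℝ generated by S equals sl(n,ℝ), the Lie algebra of traceless matrices. -/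
open Matrix

attribute [local instance 100] LieRing.ofAssociativeRing

/-! Along a path `i → ⋯ → b → c` of the digraph the brackets `⁅E i b, E b c⁆ = E i c` produce
every `E i j` with `i ≠ j`, and `⁅E i j, E j i⁆ = E i i - E j j` then supplies the diagonal of any
traceless matrix. -/

namespace Matrix

variable {ι R : Type*} [Fintype ι] [DecidableEq ι]

theorem single_lie_single_of_ne [Ring R] {i k : ι} (j : ι) (hik : i ≠ k) (a b : R) :
    ⁅single i j a, single j k b⁆ = single i k (a * b) := by
  rw [Ring.lie_def, single_mul_single_same, single_mul_single_of_ne (h := hik.symm), sub_zero]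

theorem single_lie_single_swap [Ring R] (i j : ι) (a b : R) :
    ⁅single i j a, single j i b⁆ = single i i (a * b) - single j j (b * a) := by
  rw [Ring.lie_def, single_mul_single_same, single_mul_single_same]

variable [CommRing R] {L : LieSubalgebra R (Matrix ι ι R)}

theorem single_one_mem_of_reflTransGen {Adj : ι → ι → Prop}
    (hAdj : ∀ a b, Adj a b → single a b 1 ∈ L) {i j : ι} (hij : Relation.ReflTransGen Adj i j)
    (hne : i ≠ j) : single i j 1 ∈ L := by
  induction hij with
  | refl => exact absurd rfl hne
  | @tail b c _ hbc ih =>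
    obtain rfl | hib := eq_or_ne i b
    · exact hAdj i c hbc
    · simpa [single_lie_single_of_ne b hne] using L.lie_mem (ih hib) (hAdj b c hbc)

theorem sl_le_of_single_one_mem (h : ∀ i j, i ≠ j → single i j (1 : R) ∈ L) :
    LieAlgebra.SpecialLinear.sl ι R ≤ L := by
  have hoff : ∀ i j, i ≠ j → ∀ a : R, single i j a ∈ L := fun i j hij a => by
    simpa [smul_single] using L.smul_mem a (h i j hij)
  have hdiag : ∀ i j (a : R), single i i a - single j j a ∈ L := fun i j a => by
    obtain rfl | hij := eq_or_ne i j
    · simp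
    · simpa [single_lie_single_swap] using L.lie_mem (hoff i j hij a) (h j i hij.symm)
  intro M (hM : M.trace = 0)
  cases isEmpty_or_nonempty ι
  · simp [Subsingleton.elim M 0]
  obtain ⟨z⟩ := ‹Nonempty ι›
  -- `single z z (trace M) = 0` absorbs the correction `- single z z (M i i)` in each diagonal term.
  have hsum : M = ∑ i, ∑ j, (single i j (M i j) - if i = j then single z z (M i i) else 0) := by
    have htr : ∑ i, single z z (M i i) = 0 := calc
      _ = single z z M.trace := (map_sum (singleAddMonoidHom z z) (fun i => M i i) _).symm
      _ = 0 := by rw [hM, single_zero]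
    simp only [Finset.sum_sub_distrib, Finset.sum_ite_eq, Finset.mem_univ, if_true, htr, sub_zero]
    exact matrix_eq_sum_single M
  rw [hsum]
  refine L.sum_mem fun i _ => L.sum_mem fun j _ => ?_
  obtain rfl | hij := eq_or_ne i j
  · simpa using hdiag i z (M i i)
  · simpa [hij] using hoff i j hij (M i j)

end Matrix

theorem lieSpan_eq_sl_of_strongly_connected_general
    (n : ℕ) (S : Set (Matrix (Fin n) (Fin n) ℝ))
    (hS : ∀ M ∈ S, ∃ i j : Fin n, i ≠ j ∧ M = E i j)
    (hconn : StronglyConnected (fun a b : Fin n => E a b ∈ S)) :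
    LieSubalgebra.lieSpan ℝ (Matrix (Fin n) (Fin n) ℝ) S = sl n := by
  apply le_antisymm
  · rw [LieSubalgebra.lieSpan_le]
    rintro _ hM
    obtain ⟨i, j, hij, rfl⟩ := hS _ hM
    exact trace_single_eq_of_ne i j 1 hij
  · exact sl_le_of_single_one_mem fun i j hij =>
      single_one_mem_of_reflTransGen (fun a b hab => LieSubalgebra.subset_lieSpan hab) (hconn i j) hij

/-- If `S` is a set of off-diagonal standard basis matrices `E i j` (`i ≠ j`) whose
associated digraph is strongly connected, then the Lie algebra generated by `S`
is `sl(n, ℝ)`. -/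
theorem lieSpan_eq_sl_of_strongly_connected
    (n : ℕ) (hn : 1 ≤ n) (S : Set (Matrix (Fin n) (Fin n) ℝ))
    (hS : ∀ M ∈ S, ∃ i j : Fin n, i ≠ j ∧ M = E i j)
    (hconn : StronglyConnected (fun a b : Fin n => E a b ∈ S)) :
    LieSubalgebra.lieSpan ℝ (Matrix (Fin n) (Fin n) ℝ) S = sl n :=
  lieSpan_eq_sl_of_strongly_connected_general n S hS hconn
end
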